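/- arXiv:1105.3948 — 5 statements merged into one kernel-verified Lean document; each statement's English description precedes it below -/
import Mathlib

section
/- For x ∈ ℝ⁶, one has x ≠ 0 and Q(x) = 0 if and only if there exist linearly independent vectors v, w ∈ ℂ⁴ with (v|v) = (w|w) = (v|w) = 0 such that Σ(x) = v wᵀ − w vᵀ (i.e., the bivector Σ(x) is decomposable as v ∧ w with v, w isotropic and mutually orthogonal). This establishes the bijective correspondence between generators of the null cone Q(x) = 0 in ℝ^{4,2} and maximal totally isotropic subspaces of ℂ^{2,2}. -/
/-!
A skew-symmetric 4×4 matrix is a bivector `v ∧ w` exactly when its Pfaffian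
`A₀₁A₂₃ − A₀₂A₁₃ + A₀₃A₁₂` vanishes (the Plücker relation), and the Pfaffian of `Σ(x)` is `−Q(x)`.
Since `v ∧ w ≠ 0` for independent `v, w` while `Σ(0) = 0`, a decomposable `Σ(x)` forces `x ≠ 0`
and `Q(x) = 0`. Conversely, for null `x ≠ 0` the entry `x⁶ + i x⁴` of `Σ(x)` in position (1,2) is
nonzero, because `(x⁴)² + (x⁶)²` is the sum of the other four squares; dividing by it factors
`Σ(x)` explicitly, and the two factors are isotropic and orthogonal by direct computation.
-/

open Matrix Complex

/-- The six antilinear-Clifford matrices Γ₁,…,Γ₆ (indexed 0,…,5). -/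
noncomputable def Gam : Fin 6 → Matrix (Fin 4) (Fin 4) ℂ
  | 0 => !![0, 0, I, 0; 0, 0, 0, -I; I, 0, 0, 0; 0, -I, 0, 0]
  | 1 => !![0, 0, 1, 0; 0, 0, 0, 1; 1, 0, 0, 0; 0, 1, 0, 0]
  | 2 => !![0, 0, 0, -I; 0, 0, -I, 0; 0, -I, 0, 0; -I, 0, 0, 0]
  | 3 => !![0, I, 0, 0; -I, 0, 0, 0; 0, 0, 0, I; 0, 0, -I, 0]
  | 4 => !![0, 0, 0, -1; 0, 0, 1, 0; 0, 1, 0, 0; -1, 0, 0, 0]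
  | 5 => !![0, 1, 0, 0; -1, 0, 0, 0; 0, 0, 0, -1; 0, 0, 1, 0]

/-- X(x) = Σ x^α Γ_α. -/
noncomputable def Xm (x : Fin 6 → ℝ) : Matrix (Fin 4) (Fin 4) ℂ :=
  ∑ α : Fin 6, (x α : ℂ) • Gam α

/-- The quadratic form of signature (4,2). -/
def Qform (x : Fin 6 → ℝ) : ℝ :=
  x 0 ^ 2 + x 1 ^ 2 + x 2 ^ 2 - x 3 ^ 2 + x 4 ^ 2 - x 5 ^ 2

/-- The bilinear form of signature (4,2). -/
def Qbil (x y : Fin 6 → ℝ) : ℝ :=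
  x 0 * y 0 + x 1 * y 1 + x 2 * y 2 - x 3 * y 3 + x 4 * y 4 - x 5 * y 5

/-- G = diag(1,1,-1,-1) as a function. -/
def Gv : Fin 4 → ℝ := ![1, 1, -1, -1]

/-- The pseudo-Hermitian form of signature (2,2) on ℂ⁴. -/
def herm (u v : Fin 4 → ℂ) : ℂ :=
  u 0 * starRingEnd ℂ (v 0) + u 1 * starRingEnd ℂ (v 1)
    - u 2 * starRingEnd ℂ (v 2) - u 3 * starRingEnd ℂ (v 3)

/-- The Levi-Civita symbol on four indices, ε^{0123} = 1. -/
noncomputable def eps (i j k l : Fin 4) : ℝ :=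
  (((j : ℕ) : ℝ) - ((i : ℕ) : ℝ)) * (((k : ℕ) : ℝ) - ((i : ℕ) : ℝ)) *
    (((l : ℕ) : ℝ) - ((i : ℕ) : ℝ)) * (((k : ℕ) : ℝ) - ((j : ℕ) : ℝ)) *
    (((l : ℕ) : ℝ) - ((j : ℕ) : ℝ)) * (((l : ℕ) : ℝ) - ((k : ℕ) : ℝ)) / 12

/-- The six antisymmetric matrices Σ₁,…,Σ₆ (indexed 0,…,5). -/
noncomputable def Sig : Fin 6 → Matrix (Fin 4) (Fin 4) ℂ
  | 0 => !![0, 0, -I, 0; 0, 0, 0, I; I, 0, 0, 0; 0, -I, 0, 0]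
  | 1 => !![0, 0, -1, 0; 0, 0, 0, -1; 1, 0, 0, 0; 0, 1, 0, 0]
  | 2 => !![0, 0, 0, I; 0, 0, I, 0; 0, -I, 0, 0; -I, 0, 0, 0]
  | 3 => !![0, I, 0, 0; -I, 0, 0, 0; 0, 0, 0, -I; 0, 0, I, 0]
  | 4 => !![0, 0, 0, 1; 0, 0, -1, 0; 0, 1, 0, 0; -1, 0, 0, 0]
  | 5 => !![0, 1, 0, 0; -1, 0, 0, 0; 0, 0, 0, 1; 0, 0, -1, 0]

/-- Σ(x) = Σ x^α Σ_α. -/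
noncomputable def Sm (x : Fin 6 → ℝ) : Matrix (Fin 4) (Fin 4) ℂ :=
  ∑ α : Fin 6, (x α : ℂ) • Sig α

/-- The antilinear Hodge star on antisymmetric 4×4 complex matrices. -/
noncomputable def hstar (A : Matrix (Fin 4) (Fin 4) ℂ) : Matrix (Fin 4) (Fin 4) ℂ :=
  Matrix.of fun i j =>
    (1 / 2 : ℂ) * ∑ k : Fin 4, ∑ l : Fin 4,
      ((eps i j k l : ℝ) : ℂ) * ((Gv k : ℝ) : ℂ) * ((Gv l : ℝ) : ℂ) * starRingEnd ℂ (A k l)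

section Wedge

variable {ι R : Type*} [CommRing R]

def wedge (v w : ι → R) : Matrix ι ι R :=
  Matrix.of fun i j => v i * w j - w i * v j

theorem wedge_ne_zero [Nontrivial R] {v w : ι → R} (h : LinearIndependent R ![v, w]) :
    wedge v w ≠ 0 := by
  intro hvw
  apply h.ne_zero 0
  funext i
  have hi := (LinearIndependent.pair_iff.mp h) (w i) (-v i) <| funext fun j => by
    have := congrFun (congrFun hvw i) j
    simp only [wedge, of_apply, Matrix.zero_apply] at this
    simp only [Pi.add_apply, Pi.smul_apply, smul_eq_mul, Pi.zero_apply]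
    linear_combination -this
  simpa using hi.2

def pfaffian4 (A : Matrix (Fin 4) (Fin 4) R) : R :=
  A 0 1 * A 2 3 - A 0 2 * A 1 3 + A 0 3 * A 1 2

theorem pfaffian4_wedge (v w : Fin 4 → R) : pfaffian4 (wedge v w) = 0 := by
  simp only [pfaffian4, wedge, of_apply]
  ring

end Wedge

section Factor

variable {K : Type*} [Field K] (A : Matrix (Fin 4) (Fin 4) K)

/- With `v = -A₀` (minus the first row) and `w = e₀ + w₂e₂ + w₃e₃` one gets `(v ∧ w)₀ⱼ = A₀ⱼ`;
`w₂, w₃` are chosen so that `(v ∧ w)₁ⱼ = A₁ⱼ`, and then `(v ∧ w)₂₃ = A₂₃` is the vanishing of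
the Pfaffian. -/
def wedgeFactorFst : Fin 4 → K := ![0, -A 0 1, -A 0 2, -A 0 3]

def wedgeFactorSnd : Fin 4 → K := ![1, 0, -A 1 2 / A 0 1, -A 1 3 / A 0 1]

variable {A}

theorem linearIndependent_wedgeFactor (h01 : A 0 1 ≠ 0) :
    LinearIndependent K ![wedgeFactorFst A, wedgeFactorSnd A] := by
  refine LinearIndependent.pair_iff.mpr fun s t hst => ?_
  have h0 := congrFun hst 0
  have h1 := congrFun hst 1
  simp only [wedgeFactorFst, wedgeFactorSnd, smul_cons, smul_eq_mul, mul_zero, mul_neg, smul_empty,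
    mul_one, Pi.add_apply, cons_val_zero, zero_add, Pi.zero_apply, cons_val_one, add_zero, neg_eq_zero,
    mul_eq_zero, h01, or_false] at h0 h1
  exact ⟨h1, h0⟩

theorem eq_wedge_wedgeFactor (hdiag : ∀ i, A i i = 0) (hskew : ∀ i j, A j i = -A i j)
    (h01 : A 0 1 ≠ 0) (hpf : pfaffian4 A = 0) :
    A = wedge (wedgeFactorFst A) (wedgeFactorSnd A) := by
  have h23 : A 2 3 = (A 0 2 * A 1 3 - A 0 3 * A 1 2) / A 0 1 := by
    rw [eq_div_iff h01, ← sub_eq_zero, ← hpf, pfaffian4]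
    ring
  ext i j
  fin_cases i <;> fin_cases j <;>
    simp [wedge, wedgeFactorFst, wedgeFactorSnd, hdiag, hskew 0 1, hskew 0 2, hskew 0 3,
      hskew 1 2, hskew 1 3, hskew 2 3, h23, h01]
  all_goals field_simp
  all_goals ring

end Factor

theorem Sm_eq (x : Fin 6 → ℝ) : Sm x =
    !![0, (x 3)*I + x 5, -(x 0)*I - x 1, (x 2)*I + x 4;
       -(x 3)*I - x 5, 0, (x 2)*I - x 4, (x 0)*I - x 1;
       (x 0)*I + x 1, -(x 2)*I + x 4, 0, -(x 3)*I + x 5;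
       -(x 2)*I - x 4, -(x 0)*I + x 1, (x 3)*I - x 5, 0] := by
  ext i j
  simp only [Sm, Fin.sum_univ_six, Matrix.add_apply, Matrix.smul_apply, smul_eq_mul]
  fin_cases i <;> fin_cases j <;> simp [Sig] <;> ring

theorem Sm_zero : Sm 0 = 0 := by
  simp [Sm]

theorem Sm_apply_self (x : Fin 6 → ℝ) (i : Fin 4) : Sm x i i = 0 := by
  rw [Sm_eq]
  fin_cases i <;> simp

theorem Sm_apply_swap (x : Fin 6 → ℝ) (i j : Fin 4) : Sm x j i = -Sm x i j := by
  rw [Sm_eq]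
  fin_cases i <;> fin_cases j <;> simp <;> ring

theorem pfaffian4_Sm (x : Fin 6 → ℝ) : pfaffian4 (Sm x) = -(Qform x : ℂ) := by
  simp only [pfaffian4, Sm_eq, Qform, of_apply, cons_val', cons_val_one, cons_val_zero, cons_val_fin_one,
    cons_val, ofReal_sub, ofReal_add, ofReal_pow]
  linear_combination ((x 0 : ℂ) ^ 2 + (x 2 : ℂ) ^ 2 - (x 3 : ℂ) ^ 2) * I_sq

theorem Sm_zero_one_ne_zero {x : Fin 6 → ℝ} (hx : x ≠ 0) (hQ : Qform x = 0) : Sm x 0 1 ≠ 0 := by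
  intro h
  rw [Sm_eq] at h
  have h3 : x 3 = 0 := by simpa using congrArg im h
  have h5 : x 5 = 0 := by simpa using congrArg re h
  rw [Qform, h3, h5] at hQ
  apply hx
  funext i
  fin_cases i <;> simp <;>
    nlinarith [sq_nonneg (x 0), sq_nonneg (x 1), sq_nonneg (x 2), sq_nonneg (x 4)]

theorem herm_wedgeFactorFst_Sm (x : Fin 6 → ℝ) :
    herm (wedgeFactorFst (Sm x)) (wedgeFactorFst (Sm x)) = -(Qform x : ℂ) := by
  simp only [herm, wedgeFactorFst, Sm_eq, Qform, of_apply, cons_val', cons_val_one, cons_val_zero,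
    cons_val_fin_one, cons_val, map_zero, map_add, map_sub, map_neg, map_mul, conj_ofReal, conj_I,
    mul_zero, zero_add, ofReal_sub, ofReal_add, ofReal_pow]
  linear_combination ((x 0 : ℂ) ^ 2 + (x 2 : ℂ) ^ 2 - (x 3 : ℂ) ^ 2) * I_sq

theorem herm_wedgeFactorSnd_Sm {x : Fin 6 → ℝ} (h01 : Sm x 0 1 ≠ 0) :
    herm (wedgeFactorSnd (Sm x)) (wedgeFactorSnd (Sm x)) = -(Qform x : ℂ) / normSq (Sm x 0 1) := by
  have hconj : starRingEnd ℂ (Sm x 0 1) ≠ 0 := (map_ne_zero _).mpr h01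
  rw [← mul_conj, eq_div_iff (mul_ne_zero h01 hconj)]
  simp only [Sm_eq, mul_comm _ I, of_apply, cons_val', cons_val_one, cons_val_zero, cons_val_fin_one,
    map_add, map_mul, conj_I, conj_ofReal, neg_mul] at h01 hconj
  simp only [herm, wedgeFactorSnd, Sm_eq, Qform, of_apply, cons_val', cons_val, cons_val_fin_one,
    cons_val_one, cons_val_zero, map_one, mul_one, map_zero, mul_zero, add_zero, map_div₀, map_sub,
    map_add, map_mul, map_neg, conj_ofReal, conj_I, ofReal_sub, ofReal_add, ofReal_pow]
  field_simp
  linear_combination ((x 0 : ℂ) ^ 2 + (x 2 : ℂ) ^ 2 - (x 3 : ℂ) ^ 2) * I_sq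

theorem herm_wedgeFactorFst_wedgeFactorSnd_Sm (x : Fin 6 → ℝ) :
    herm (wedgeFactorFst (Sm x)) (wedgeFactorSnd (Sm x)) = 0 := by
  simp only [herm, wedgeFactorFst, wedgeFactorSnd, Sm_eq, of_apply, cons_val', cons_val_one,
    cons_val_zero, cons_val_fin_one, cons_val, map_one, mul_one, map_zero, mul_zero, add_zero, map_div₀,
    map_sub, map_add, map_mul, map_neg, conj_ofReal, conj_I, zero_sub]
  ring

/-- x ≠ 0 and Q(x) = 0 if and only if the bivector Σ(x) is decomposable as v ∧ w with v, w
linearly independent, isotropic and mutually orthogonal for the (2,2) pseudo-Hermitian form: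
the bijective correspondence between generators of the null cone in ℝ^{4,2} and maximal
totally isotropic subspaces of ℂ^{2,2}. -/
theorem null_cone_iff_decomposable :
    ∀ x : Fin 6 → ℝ,
      (x ≠ 0 ∧ Qform x = 0) ↔
        ∃ v w : Fin 4 → ℂ,
          LinearIndependent ℂ ![v, w] ∧
          herm v v = 0 ∧ herm w w = 0 ∧ herm v w = 0 ∧
          Sm x = Matrix.of (fun i j => v i * w j - w i * v j) := by
  intro x
  constructor
  · rintro ⟨hx, hQ⟩
    have h01 := Sm_zero_one_ne_zero hx hQ
    refine ⟨wedgeFactorFst (Sm x), wedgeFactorSnd (Sm x), linearIndependent_wedgeFactor h01,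
      by simp [herm_wedgeFactorFst_Sm, hQ], by simp [herm_wedgeFactorSnd_Sm h01, hQ],
      herm_wedgeFactorFst_wedgeFactorSnd_Sm x,
      eq_wedge_wedgeFactor (Sm_apply_self x) (Sm_apply_swap x) h01 (by simp [pfaffian4_Sm, hQ])⟩
  · rintro ⟨v, w, hvw, -, -, -, hS⟩
    refine ⟨fun hx => wedge_ne_zero hvw ?_, ?_⟩
    · rw [wedge, ← hS, hx, Sm_zero]
    · have hpf := pfaffian4_Sm x
      rw [hS, ← wedge, pfaffian4_wedge, eq_comm, neg_eq_zero] at hpf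
      exact_mod_cast hpf
end

section
/- Let x ∈ ℝ⁶ be nonzero with Q(x) = 0. Then the range (column space) of the matrix X(x) equals the kernel of conj(X(x)), this subspace has complex dimension 2, and it is totally isotropic with respect to the pseudo-Hermitian form: (X(x)u | X(x)v) = 0 for all u, v ∈ ℂ⁴. -/
open Matrix Complex

/-!
The Γ_α satisfy the Clifford-type relations conj(X(x)) X(x) = Q(x) · 1 and
X(x)ᴴ G X(x) = -Q(x) G. For a null vector the first identity puts the range of X(x)
inside the kernel of conj(X(x)); as conjugation preserves rank, rank X(x) ≤ 4 - rank X(x), so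
rank X(x) ≤ 2, with equality because some principal 2 × 2 minor of X(x) is nonzero when x ≠ 0.
Equal dimensions then force range = kernel, and the second identity gives total isotropy.
-/

open scoped ComplexOrder

lemma Matrix.rank_map_starRingEnd {m n R : Type*} [Fintype m] [Fintype n] [Field R]
    [PartialOrder R] [StarRing R] [StarOrderedRing R] (A : Matrix m n R) :
    (A.map (starRingEnd R)).rank = A.rank :=
  (rank_transpose Aᴴ).trans (rank_conjTranspose A)

lemma Matrix.card_le_rank_of_det_submatrix_ne_zero {m n ι R : Type*} [Fintype n] [Fintype ι]
    [DecidableEq ι] [CommRing R] [IsDomain R] (A : Matrix m n R) (r : ι → m) (c : ι → n)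
    (h : (A.submatrix r c).det ≠ 0) : Fintype.card ι ≤ A.rank :=
  (rank_of_det_ne_zero h).symm.le.trans (rank_submatrix_le A r c)

lemma Matrix.range_mulVecLin_eq_ker_of_mul_eq_zero {l m n R : Type*} [Fintype m] [Fintype n]
    [Field R] {A : Matrix m n R} {B : Matrix l m R} (hBA : B * A = 0)
    (hrank : A.rank + B.rank = Fintype.card m) :
    LinearMap.range A.mulVecLin = LinearMap.ker B.mulVecLin := by
  have hle : LinearMap.range A.mulVecLin ≤ LinearMap.ker B.mulVecLin := by
    rw [LinearMap.range_le_ker_iff, ← mulVecLin_mul, hBA, mulVecLin_zero]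
  refine Submodule.eq_of_le_of_finrank_eq hle ?_
  have hB := LinearMap.finrank_range_add_finrank_ker B.mulVecLin
  rw [Module.finrank_fintype_fun_eq_card] at hB
  change A.rank = _
  change B.rank + _ = _ at hB
  omega

def Gmat : Matrix (Fin 4) (Fin 4) ℂ := diagonal fun i => (Gv i : ℂ)

lemma herm_eq_star_dotProduct (u v : Fin 4 → ℂ) : herm u v = star v ⬝ᵥ (Gmat *ᵥ u) := by
  simp only [herm, dotProduct, Pi.star_apply, RCLike.star_def, Gmat, Gv, mulVec_diagonal,
    Fin.sum_univ_four, cons_val_zero, ofReal_one, one_mul, cons_val_one, cons_val, ofReal_neg,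
    neg_mul]
  ring

lemma herm_mulVec_mulVec (A : Matrix (Fin 4) (Fin 4) ℂ) (u v : Fin 4 → ℂ) :
    herm (A *ᵥ u) (A *ᵥ v) = star v ⬝ᵥ ((Aᴴ * Gmat * A) *ᵥ u) := by
  rw [herm_eq_star_dotProduct, star_mulVec, ← dotProduct_mulVec, mulVec_mulVec, mulVec_mulVec,
    Matrix.mul_assoc]

lemma Xm_eq (x : Fin 6 → ℝ) :
    Xm x = !![0, (x 5 : ℂ) + (x 3 : ℂ) * I, (x 1 : ℂ) + (x 0 : ℂ) * I, -(x 4 : ℂ) - (x 2 : ℂ) * I;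
              -(x 5 : ℂ) - (x 3 : ℂ) * I, 0, (x 4 : ℂ) - (x 2 : ℂ) * I, (x 1 : ℂ) - (x 0 : ℂ) * I;
              (x 1 : ℂ) + (x 0 : ℂ) * I, (x 4 : ℂ) - (x 2 : ℂ) * I, 0, -(x 5 : ℂ) + (x 3 : ℂ) * I;
              -(x 4 : ℂ) - (x 2 : ℂ) * I, (x 1 : ℂ) - (x 0 : ℂ) * I, (x 5 : ℂ) - (x 3 : ℂ) * I, 0] := by
  ext i j
  simp only [Xm, Matrix.sum_apply, Matrix.smul_apply, smul_eq_mul, Fin.sum_univ_six]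
  fin_cases i <;> fin_cases j <;> simp [Gam] <;> ring

lemma Xm_apply_self (x : Fin 6 → ℝ) (i : Fin 4) : Xm x i i = 0 := by
  rw [Xm_eq]
  fin_cases i <;> rfl

lemma conj_Xm_mul_Xm (x : Fin 6 → ℝ) :
    (Xm x).map (starRingEnd ℂ) * Xm x = (Qform x : ℂ) • 1 := by
  rw [Xm_eq]
  ext i j
  fin_cases i <;> fin_cases j <;>
    simp [Matrix.mul_apply, Fin.sum_univ_four, Qform, Complex.ext_iff, sq] <;> constructor <;> ring

lemma Xm_conjTranspose_mul_Gmat_mul_Xm (x : Fin 6 → ℝ) :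
    (Xm x)ᴴ * Gmat * Xm x = -(Qform x : ℂ) • Gmat := by
  rw [Xm_eq]
  ext i j
  fin_cases i <;> fin_cases j <;>
    simp [Gmat, Gv, Matrix.mul_apply, Fin.sum_univ_four, Qform, Complex.ext_iff, sq] <;>
    constructor <;> ring

/- The three products are -(x 5 + i x 3)², (x 1 + i x 0)² and (x 4 + i x 2)², which together
involve every coordinate. -/
lemma exists_Xm_zero_mul_ne_zero {x : Fin 6 → ℝ} (hx : x ≠ 0) :
    ∃ i, Xm x 0 i * Xm x i 0 ≠ 0 := by
  by_contra! h
  have h1 := h 1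
  have h2 := h 2
  have h3 := h 3
  simp only [Xm_eq, of_apply, cons_val', cons_val_one, cons_val_zero, cons_val_fin_one,
    mul_eq_zero, Complex.ext_iff, add_re, ofReal_re, mul_re, I_re, mul_zero, ofReal_im, I_im,
    mul_one, sub_self, add_zero, zero_re, add_im, mul_im, zero_add, zero_im, sub_re, neg_re,
    sub_zero, neg_eq_zero, sub_im, neg_im, neg_zero, zero_sub, or_self, cons_val] at h1 h2 h3
  exact hx (funext fun i => by fin_cases i <;> simp_all)

lemma two_le_rank_Xm {x : Fin 6 → ℝ} (hx : x ≠ 0) : 2 ≤ (Xm x).rank := by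
  obtain ⟨i, hi⟩ := exists_Xm_zero_mul_ne_zero hx
  refine card_le_rank_of_det_submatrix_ne_zero (Xm x) ![0, i] ![0, i] ?_
  rw [det_fin_two]
  simpa [Xm_apply_self] using hi

/-- For nonzero null x, the range of X(x) equals the kernel of conj(X(x)), has complex
dimension 2, and is totally isotropic for the (2,2) pseudo-Hermitian form. -/
theorem range_X_eq_ker_conjX (x : Fin 6 → ℝ) (hx : x ≠ 0) (hQ : Qform x = 0) :
    LinearMap.range (Xm x).mulVecLin =
        LinearMap.ker ((Xm x).map (starRingEnd ℂ)).mulVecLin ∧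
      Module.finrank ℂ (LinearMap.range (Xm x).mulVecLin) = 2 ∧
      ∀ u v : Fin 4 → ℂ, herm ((Xm x).mulVec u) ((Xm x).mulVec v) = 0 := by
  have hQ' : (Qform x : ℂ) = 0 := by rw [hQ, Complex.ofReal_zero]
  have hXX : (Xm x).map (starRingEnd ℂ) * Xm x = 0 := by
    rw [conj_Xm_mul_Xm, hQ', zero_smul]
  have hrank_conj := rank_map_starRingEnd (Xm x)
  have hrank : (Xm x).rank = 2 := by
    have hsum := rank_add_rank_le_card_of_mul_eq_zero hXX
    rw [hrank_conj, Fintype.card_fin] at hsum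
    have := two_le_rank_Xm hx
    omega
  refine ⟨range_mulVecLin_eq_ker_of_mul_eq_zero hXX ?_, hrank, fun u v => ?_⟩
  · rw [hrank_conj, hrank, Fintype.card_fin]
  · rw [herm_mulVec_mulVec, Xm_conjTranspose_mul_Gmat_mul_Xm, hQ', neg_zero, zero_smul,
      zero_mulVec, dotProduct_zero]
end

section
/- Let v ∈ ℂ⁴ be nonzero with (v|v) = 0. Then the set N(v) = {x ∈ ℝ⁶ : X(x)·conj(v) = 0} is a real-linear subspace of ℝ⁶ of real dimension 2 on which the quadratic form vanishes identically (Q(x) = 0 for every x ∈ N(v)); i.e., N(v) is a maximal totally isotropic subspace of ℝ^{4,2}. -/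
open Matrix Complex

/-!
In the complex coordinates `a = zA x`, `b = zB x`, `c = zC x` the form is
`Q = |a|² + |b|² - |c|²`, and `X(x) v̄ = 0` is a system of four complex equations.
Two of them express `E a` and `E b`, where `E = |v 2|² + |v 3|²` (indices from 0) is
nonzero, as real-linear functions of `c`; granted these, the remaining two equations
reduce to `(v|v) = 0`.
Hence `N(v)` is the graph `c ↦ nullVec v c` of a real-linear map `ℂ → ℂ²`, spanned by the
images of `1` and `i`, and isotropy of `v` once more gives `|E a|² + |E b|² = E² |c|²`,
that is `Q = 0`.
-/

open ComplexConjugate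

def zA (x : Fin 6 → ℝ) : ℂ := ⟨x 1, x 0⟩

def zB (x : Fin 6 → ℝ) : ℂ := ⟨x 4, x 2⟩

def zC (x : Fin 6 → ℝ) : ℂ := ⟨x 5, x 3⟩

def ofCoords (a b c : ℂ) : Fin 6 → ℝ := ![a.im, a.re, b.im, c.im, b.re, c.re]

@[simp] lemma zA_ofCoords (a b c : ℂ) : zA (ofCoords a b c) = a := rfl

@[simp] lemma zB_ofCoords (a b c : ℂ) : zB (ofCoords a b c) = b := rfl

@[simp] lemma zC_ofCoords (a b c : ℂ) : zC (ofCoords a b c) = c := rfl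

lemma ofCoords_zA_zB_zC (x : Fin 6 → ℝ) : ofCoords (zA x) (zB x) (zC x) = x := by
  funext i; fin_cases i <;> rfl

lemma Qform_eq (x : Fin 6 → ℝ) : Qform x = normSq (zA x) + normSq (zB x) - normSq (zC x) := by
  simp only [Qform, normSq_mk, zA, zB, zC]; ring

lemma Xm_mulVec (x : Fin 6 → ℝ) (w : Fin 4 → ℂ) :
    Xm x *ᵥ w = ![zC x * w 1 + zA x * w 2 - zB x * w 3,
      -(zC x * w 0) + conj (zB x) * w 2 + conj (zA x) * w 3,
      zA x * w 0 + conj (zB x) * w 1 - conj (zC x) * w 3,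
      -(zB x * w 0) + conj (zA x) * w 1 + conj (zC x) * w 2] := by
  have hz : ∀ a b : ℝ, (⟨a, b⟩ : ℂ) = a + b * I := mk_eq_add_mul_I
  funext i
  fin_cases i <;>
    simp [Xm, Gam, mulVec, dotProduct, Fin.sum_univ_six, Fin.sum_univ_four, zA, zB, zC, hz,
      conj_ofReal] <;> ring

lemma Xm_add (x y : Fin 6 → ℝ) : Xm (x + y) = Xm x + Xm y := by
  simp only [Xm, Pi.add_apply, ofReal_add, add_smul, Finset.sum_add_distrib]

lemma Xm_smul (s : ℝ) (x : Fin 6 → ℝ) : Xm (s • x) = (s : ℂ) • Xm x := by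
  simp only [Xm, Pi.smul_apply, smul_eq_mul, ofReal_mul, mul_smul, Finset.smul_sum]

noncomputable def nullSpace (v : Fin 4 → ℂ) : Submodule ℝ (Fin 6 → ℝ) where
  carrier := {x | Xm x *ᵥ (fun i => conj (v i)) = 0}
  add_mem' {x y} (hx : Xm x *ᵥ _ = 0) (hy : Xm y *ᵥ _ = 0) := by
    change Xm (x + y) *ᵥ _ = 0
    rw [Xm_add, add_mulVec, hx, hy, add_zero]
  zero_mem' := by simp [Xm]
  smul_mem' s x (hx : Xm x *ᵥ _ = 0) := by
    change Xm (s • x) *ᵥ _ = 0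
    rw [Xm_smul, smul_mulVec, hx, smul_zero]

section Spinor

variable {v : Fin 4 → ℂ}

variable (v) in
def lowerNormSq : ℝ := normSq (v 2) + normSq (v 3)

variable (v) in
def coeffA (c : ℂ) : ℂ := conj c * (v 0 * conj (v 3)) - c * (v 2 * conj (v 1))

variable (v) in
def coeffB (c : ℂ) : ℂ := conj c * (v 0 * conj (v 2)) + c * (v 3 * conj (v 1))

variable (v) in
noncomputable def nullVec (c : ℂ) : Fin 6 → ℝ :=
  ofCoords (coeffA v c / lowerNormSq v) (coeffB v c / lowerNormSq v) c

variable (v) in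
lemma lowerNormSq_eq : (lowerNormSq v : ℂ) = v 2 * conj (v 2) + v 3 * conj (v 3) := by
  simp [lowerNormSq, mul_conj]

variable (v) in
lemma herm_self_eq : herm v v = ((normSq (v 0) + normSq (v 1) - lowerNormSq v : ℝ) : ℂ) := by
  simp only [herm, lowerNormSq, mul_conj]; push_cast; ring

lemma lowerNormSq_ne_zero (hv : v ≠ 0) (hiso : herm v v = 0) : lowerNormSq v ≠ 0 := by
  intro h
  rw [herm_self_eq, h, ofReal_eq_zero, sub_zero] at hiso
  simp only [lowerNormSq] at h
  have := normSq_nonneg (v 0); have := normSq_nonneg (v 1)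
  have := normSq_nonneg (v 2); have := normSq_nonneg (v 3)
  refine hv (funext fun i => normSq_eq_zero.mp ?_)
  fin_cases i <;> simp only [Fin.isValue, Fin.zero_eta, Fin.mk_one, Fin.reduceFinMk] <;> linarith

lemma lowerNormSq_mul_zA_zB_of_mem_nullSpace {x : Fin 6 → ℝ} (hx : x ∈ nullSpace v) :
    lowerNormSq v * zA x = coeffA v (zC x) ∧ lowerNormSq v * zB x = coeffB v (zC x) := by
  have hx : Xm x *ᵥ (fun i => conj (v i)) = 0 := hx
  rw [Xm_mulVec] at hx
  simp only [cons_eq_zero_iff] at hx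
  obtain ⟨h0, h1, -⟩ := hx
  have h1' := congrArg conj h1
  simp only [map_add, map_neg, map_mul, conj_conj, map_zero] at h1'
  constructor
  · unfold coeffA
    linear_combination v 2 * h0 + conj (v 3) * h1' + zA x * lowerNormSq_eq v
  · unfold coeffB
    linear_combination -v 3 * h0 + conj (v 2) * h1' + zB x * lowerNormSq_eq v

lemma mem_nullSpace_of_lowerNormSq_mul (hiso : herm v v = 0) (hE : lowerNormSq v ≠ 0)
    {x : Fin 6 → ℝ} (ha : lowerNormSq v * zA x = coeffA v (zC x))
    (hb : lowerNormSq v * zB x = coeffB v (zC x)) :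
    x ∈ nullSpace v := by
  have hiso' : v 0 * conj (v 0) + v 1 * conj (v 1) - v 2 * conj (v 2) - v 3 * conj (v 3) = 0 :=
    hiso
  have hE' := lowerNormSq_eq v
  have hac := congrArg conj ha
  have hbc := congrArg conj hb
  simp only [coeffA, coeffB, map_sub, map_add, map_mul, conj_conj, conj_ofReal] at ha hb hac hbc
  change Xm x *ᵥ _ = 0
  rw [Xm_mulVec]
  simp only [cons_eq_zero_iff, zero_empty, and_true]
  refine ⟨?_, ?_, ?_, ?_⟩ <;> refine mul_left_cancel₀ (ofReal_ne_zero.mpr hE) ?_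
  · linear_combination conj (v 2) * ha - conj (v 3) * hb + zC x * conj (v 1) * hE'
  · linear_combination conj (v 2) * hbc + conj (v 3) * hac - zC x * conj (v 0) * hE'
  · linear_combination conj (v 0) * ha + conj (v 1) * hbc - conj (zC x) * conj (v 3) * hE'
      + conj (zC x) * conj (v 3) * hiso'
  · linear_combination -conj (v 0) * hb + conj (v 1) * hac + conj (zC x) * conj (v 2) * hE'
      - conj (zC x) * conj (v 2) * hiso'

lemma nullVec_mem_nullSpace (hiso : herm v v = 0) (hE : lowerNormSq v ≠ 0) (c : ℂ) :
    nullVec v c ∈ nullSpace v :=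
  mem_nullSpace_of_lowerNormSq_mul hiso hE (mul_div_cancel₀ _ (ofReal_ne_zero.mpr hE))
    (mul_div_cancel₀ _ (ofReal_ne_zero.mpr hE))

lemma eq_nullVec_zC (hE : lowerNormSq v ≠ 0) {x : Fin 6 → ℝ} (hx : x ∈ nullSpace v) :
    x = nullVec v (zC x) := by
  obtain ⟨ha, hb⟩ := lowerNormSq_mul_zA_zB_of_mem_nullSpace hx
  have hE' : (lowerNormSq v : ℂ) ≠ 0 := ofReal_ne_zero.mpr hE
  rw [nullVec, ← ha, ← hb, mul_div_cancel_left₀ _ hE', mul_div_cancel_left₀ _ hE',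
    ofCoords_zA_zB_zC]

variable (v) in
@[simp] lemma nullVec_zero : nullVec v 0 = 0 := by
  funext i; fin_cases i <;> simp [nullVec, ofCoords, coeffA, coeffB]

variable (v) in
lemma linearIndependent_nullVec_one_I : LinearIndependent ℝ ![nullVec v 1, nullVec v I] := by
  rw [LinearIndependent.pair_iff]
  intro s t hst
  simpa [nullVec, ofCoords] using And.intro (congrFun hst 5) (congrFun hst 3)

lemma nullSpace_eq_span (hiso : herm v v = 0) (hE : lowerNormSq v ≠ 0) :
    nullSpace v = Submodule.span ℝ {nullVec v 1, nullVec v I} := by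
  have h1 := nullVec_mem_nullSpace hiso hE 1
  have hI := nullVec_mem_nullSpace hiso hE I
  refine le_antisymm (fun x hx => ?_)
    (Submodule.span_le.mpr (Set.insert_subset h1 (Set.singleton_subset_iff.mpr hI)))
  set c := zC x
  have hy : x - c.re • nullVec v 1 - c.im • nullVec v I ∈ nullSpace v :=
    sub_mem (sub_mem hx (Submodule.smul_mem _ _ h1)) (Submodule.smul_mem _ _ hI)
  have hzC : zC (x - c.re • nullVec v 1 - c.im • nullVec v I) = 0 := by
    apply Complex.ext <;> simp [c, zC, nullVec, ofCoords, vecHead, vecTail]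
  have hy0 := eq_nullVec_zC hE hy
  rw [hzC, nullVec_zero, sub_sub, sub_eq_zero] at hy0
  exact Submodule.mem_span_pair.mpr ⟨c.re, c.im, hy0.symm⟩

lemma normSq_coeffA_add_normSq_coeffB (hiso : herm v v = 0) (c : ℂ) :
    normSq (coeffA v c) + normSq (coeffB v c) = lowerNormSq v ^ 2 * normSq c := by
  have hiso' : v 0 * conj (v 0) + v 1 * conj (v 1) - v 2 * conj (v 2) - v 3 * conj (v 3) = 0 :=
    hiso
  apply ofReal_injective
  push_cast [lowerNormSq_eq, ← mul_conj]
  simp only [coeffA, coeffB, map_sub, map_add, map_mul, conj_conj]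
  linear_combination (v 2 * conj (v 2) + v 3 * conj (v 3)) * c * conj c * hiso'

lemma Qform_nullVec (hiso : herm v v = 0) (hE : lowerNormSq v ≠ 0) (c : ℂ) :
    Qform (nullVec v c) = 0 := by
  rw [Qform_eq, nullVec, zA_ofCoords, zB_ofCoords, zC_ofCoords, normSq_div, normSq_div,
    normSq_ofReal, ← add_div, normSq_coeffA_add_normSq_coeffB hiso, ← sq,
    mul_div_cancel_left₀ _ (pow_ne_zero 2 hE), sub_self]

end Spinor

/-- For a nonzero isotropic spinor v, the set N(v) = {x ∈ ℝ⁶ : X(x)·conj(v) = 0} is a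
real-linear subspace of ℝ⁶ of dimension 2 (the span of two linearly independent vectors)
on which Q vanishes identically: a maximal totally isotropic subspace of ℝ^{4,2}. -/
theorem Nv_maximal_isotropic (v : Fin 4 → ℂ) (hv : v ≠ 0) (hiso : herm v v = 0) :
    (∃ x₁ x₂ : Fin 6 → ℝ, LinearIndependent ℝ ![x₁, x₂] ∧
      {x : Fin 6 → ℝ | (Xm x).mulVec (fun i => starRingEnd ℂ (v i)) = 0} =
        ↑(Submodule.span ℝ ({x₁, x₂} : Set (Fin 6 → ℝ)))) ∧
    ∀ x : Fin 6 → ℝ, (Xm x).mulVec (fun i => starRingEnd ℂ (v i)) = 0 → Qform x = 0 := by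
  have hE := lowerNormSq_ne_zero hv hiso
  refine ⟨⟨nullVec v 1, nullVec v I, linearIndependent_nullVec_one_I v, ?_⟩, fun x hx => ?_⟩
  · rw [← nullSpace_eq_span hiso hE]
    rfl
  · rw [eq_nullVec_zC hE (show x ∈ nullSpace v from hx)]
    exact Qform_nullVec hiso hE _
end

section
/- Let U ∈ M₄(ℂ) with U G U† = G and det U = 1 (i.e., U ∈ SU(2,2)). Then the following are equivalent: (i) either U·X(x)·(conj U)⁻¹ = X(x) for all x ∈ ℝ⁶, or U·X(x)·(conj U)⁻¹ = −X(x) for all x ∈ ℝ⁶; (ii) U ∈ {I₄, −I₄, iI₄, −iI₄}. In other words, the kernel of the induced action of SU(2,2) on the projective quadric (compactified Minkowski space) is the cyclic group {1, −1, i, −i}. -/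
open Matrix Complex

/-!
If `U X(x) (conj U)⁻¹ = s X(x)` for all `x` (with `s = ±1`), then `U Γ_α = Γ_α (s conj U)`
for every `α`; since `Γ₂² = 1`, this gives `s conj U = Γ₂ U Γ₂`, so `U` commutes with every
product `Γ_α Γ₂`. These products have trivial commutant, so `U = c I₄` and `det U = c⁴ = 1`.
Conversely a scalar `c` of modulus one acts by `X ↦ c² X`.
-/

theorem Xm_single (α : Fin 6) : Xm (Pi.single α 1) = Gam α := by
  rw [Xm, Finset.sum_eq_single α (fun β _ hβ => by simp [hβ]) (by simp)]
  simp

theorem Gam_one_mul_self : Gam 1 * Gam 1 = 1 := by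
  ext i j
  fin_cases i <;> fin_cases j <;> simp [Gam, Matrix.mul_apply, Fin.sum_univ_four]

theorem eq_smul_one_of_commute_Gam_mul_Gam_one {U : Matrix (Fin 4) (Fin 4) ℂ}
    (h : ∀ α, Commute U (Gam α * Gam 1)) : U = U 0 0 • 1 := by
  have entry : ∀ α i j, (U * (Gam α * Gam 1)) i j = (Gam α * Gam 1 * U) i j :=
    fun α i j => congrFun (congrFun (h α).eq i) j
  -- `Γ₁Γ₂ = i·diag(1,-1,1,-1)` kills the entries joining indices of different parity;
  -- `Γ₃Γ₂`, `Γ₄Γ₂`, `Γ₅Γ₂` then kill the rest and equate the diagonal.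
  have h0_01 := entry 0 0 1
  have h0_03 := entry 0 0 3
  have h0_10 := entry 0 1 0
  have h0_12 := entry 0 1 2
  have h0_21 := entry 0 2 1
  have h0_23 := entry 0 2 3
  have h0_30 := entry 0 3 0
  have h0_32 := entry 0 3 2
  have h2_01 := entry 2 0 1
  have h2_23 := entry 2 2 3
  have h2_03 := entry 2 0 3
  have h2_21 := entry 2 2 1
  have h3_03 := entry 3 0 3
  have h4_03 := entry 4 0 3
  have h4_21 := entry 4 2 1
  clear entry h
  simp [Gam, Matrix.mul_apply, Fin.sum_univ_four] at *
  have hI : I ≠ 0 := I_ne_zero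
  ext i j
  fin_cases i <;> fin_cases j <;> simp <;> grind

theorem commute_Gam_mul_Gam_one_of_mul_Gam_eq {U V : Matrix (Fin 4) (Fin 4) ℂ}
    (h : ∀ α, U * Gam α = Gam α * V) (α : Fin 6) : Commute U (Gam α * Gam 1) := by
  have hV : V = Gam 1 * U * Gam 1 := by
    rw [Matrix.mul_assoc, h, ← Matrix.mul_assoc, Gam_one_mul_self, Matrix.one_mul]
  calc U * (Gam α * Gam 1) = Gam α * (Gam 1 * U * Gam 1) * Gam 1 := by
        rw [← Matrix.mul_assoc, h, hV]
    _ = Gam α * Gam 1 * U := by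
        simp only [Matrix.mul_assoc, Gam_one_mul_self, Matrix.mul_one]

theorem mul_Gam_eq_of_forall_mul_Xm_mul_inv {U V : Matrix (Fin 4) (Fin 4) ℂ} {s : ℂ}
    (hV : IsUnit V.det) (h : ∀ x, U * Xm x * V⁻¹ = s • Xm x) (α : Fin 6) :
    U * Gam α = Gam α * (s • V) := by
  have hα := congrArg (· * V) (h (Pi.single α 1))
  simp only [Xm_single, Matrix.mul_assoc, Matrix.nonsing_inv_mul _ hV, Matrix.mul_one] at hα
  rw [hα, Matrix.smul_mul, Matrix.mul_smul]

theorem eq_smul_one_of_forall_mul_Xm_mul_inv {U V : Matrix (Fin 4) (Fin 4) ℂ} {s : ℂ}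
    (hV : IsUnit V.det) (h : ∀ x, U * Xm x * V⁻¹ = s • Xm x) : U = U 0 0 • 1 :=
  eq_smul_one_of_commute_Gam_mul_Gam_one
    (commute_Gam_mul_Gam_one_of_mul_Gam_eq (mul_Gam_eq_of_forall_mul_Xm_mul_inv hV h))

theorem Complex.eq_one_or_neg_one_or_I_or_neg_I_of_pow_four_eq_one {z : ℂ} (hz : z ^ 4 = 1) :
    z = 1 ∨ z = -1 ∨ z = I ∨ z = -I := by
  have : (z - 1) * (z + 1) * (z - I) * (z + I) = 0 := by
    linear_combination hz + (1 - z ^ 2) * I_mul_I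
  simp only [mul_eq_zero, sub_eq_zero, add_eq_zero_iff_eq_neg] at this
  tauto

theorem smul_one_mul_mul_inv_map_conj {n : Type*} [Fintype n] [DecidableEq n] {c : ℂ}
    (hc : starRingEnd ℂ c * c = 1) (X : Matrix n n ℂ) :
    (c • 1 : Matrix n n ℂ) * X * ((c • 1 : Matrix n n ℂ).map (starRingEnd ℂ))⁻¹ =
      (c * c) • X := by
  have hmap : (c • 1 : Matrix n n ℂ).map (starRingEnd ℂ) = starRingEnd ℂ c • 1 := by
    ext i j
    simp [Matrix.one_apply, apply_ite (starRingEnd ℂ)]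
  have hinv : (starRingEnd ℂ c • 1 : Matrix n n ℂ)⁻¹ = c • 1 :=
    Matrix.inv_eq_right_inv (by rw [smul_mul_smul_comm, hc, Matrix.one_mul, one_smul])
  rw [hmap, hinv, Matrix.smul_mul, Matrix.one_mul, Matrix.mul_smul, Matrix.mul_one, smul_smul]

theorem kernel_of_action_general (U : Matrix (Fin 4) (Fin 4) ℂ)
    (hdet : U.det = 1) :
    ((∀ x : Fin 6 → ℝ, U * Xm x * (U.map (starRingEnd ℂ))⁻¹ = Xm x) ∨
        (∀ x : Fin 6 → ℝ, U * Xm x * (U.map (starRingEnd ℂ))⁻¹ = -Xm x)) ↔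
      (U = 1 ∨ U = -1 ∨ U = Complex.I • (1 : Matrix (Fin 4) (Fin 4) ℂ) ∨
        U = -(Complex.I • (1 : Matrix (Fin 4) (Fin 4) ℂ))) := by
  constructor
  · intro h
    have hconj : IsUnit (U.map (starRingEnd ℂ)).det := by
      rw [show U.map (starRingEnd ℂ) = Uᴴᵀ from rfl, det_transpose, det_conjTranspose, hdet,
        star_one]
      exact isUnit_one
    obtain ⟨s, hs⟩ : ∃ s : ℂ, ∀ x, U * Xm x * (U.map (starRingEnd ℂ))⁻¹ = s • Xm x :=
      h.elim (fun h => ⟨1, by simpa using h⟩) (fun h => ⟨-1, by simpa using h⟩)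
    have hU := eq_smul_one_of_forall_mul_Xm_mul_inv hconj hs
    have h4 : U 0 0 ^ 4 = 1 := by
      rwa [hU, Matrix.det_smul, Matrix.det_one, mul_one, Fintype.card_fin] at hdet
    rw [hU]
    rcases Complex.eq_one_or_neg_one_or_I_or_neg_I_of_pow_four_eq_one h4 with h | h | h | h <;>
      simp [h]
  · intro hU
    obtain ⟨c, rfl, hc, hcc⟩ : ∃ c : ℂ, U = c • 1 ∧ starRingEnd ℂ c * c = 1 ∧
        (c * c = 1 ∨ c * c = -1) := by
      rcases hU with rfl | rfl | rfl | rfl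
      exacts [⟨1, by simp⟩, ⟨-1, by simp⟩, ⟨I, by simp⟩, ⟨-I, by simp⟩]
    simp only [smul_one_mul_mul_inv_map_conj hc]
    rcases hcc with hcc | hcc <;> simp [hcc]

/-- The kernel of the induced action of SU(2,2) on the compactified Minkowski space
(projective quadric) is {1, -1, i, -i}: for U ∈ SU(2,2), U·X(x)·(conj U)⁻¹ = ±X(x) for all x
iff U is one of ±I₄, ±iI₄. -/
theorem kernel_of_action (U : Matrix (Fin 4) (Fin 4) ℂ)
    (hU : U * Matrix.diagonal (fun i => ((Gv i : ℝ) : ℂ)) * Uᴴ =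
      Matrix.diagonal (fun i => ((Gv i : ℝ) : ℂ)))
    (hdet : U.det = 1) :
    ((∀ x : Fin 6 → ℝ, U * Xm x * (U.map (starRingEnd ℂ))⁻¹ = Xm x) ∨
        (∀ x : Fin 6 → ℝ, U * Xm x * (U.map (starRingEnd ℂ))⁻¹ = -Xm x)) ↔
      (U = 1 ∨ U = -1 ∨ U = Complex.I • (1 : Matrix (Fin 4) (Fin 4) ℂ) ∨
        U = -(Complex.I • (1 : Matrix (Fin 4) (Fin 4) ℂ))) :=
  kernel_of_action_general U hdet
end

section
/- The representation of the Clifford algebra Cl(4,2) on ℂ⁴ viewed as an 8-dimensional real vector space is irreducible: if W is a real-linear subspace of ℂ⁴ such that Γ_α · conj(w) ∈ W for every w ∈ W and every α ∈ {1,…,6}, then W = {0} or W = ℂ⁴. -/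
open Matrix Complex

noncomputable def StC (a : Fin 6) (w : Fin 4 → ℂ) : Fin 4 → ℂ :=
  (Gam a).mulVec (fun i => starRingEnd ℂ (w i))

def eV (j : Fin 4) (c : ℂ) : Fin 4 → ℂ := fun i => if i = j then c else 0

lemma StC_apply (a : Fin 6) (w : Fin 4 → ℂ) (i : Fin 4) :
    StC a w i = Gam a i 0 * starRingEnd ℂ (w 0) + Gam a i 1 * starRingEnd ℂ (w 1)
      + Gam a i 2 * starRingEnd ℂ (w 2) + Gam a i 3 * starRingEnd ℂ (w 3) := by
  simp [StC, Matrix.mulVec, dotProduct, Fin.sum_univ_four]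

lemma p24 (w : Fin 4 → ℂ) : StC 2 (StC 4 w) = ![I * w 0, -I * w 1, -I * w 2, I * w 3] := by
  funext i
  fin_cases i <;> simp [StC_apply, Gam, Complex.conj_I, Matrix.vecHead, Matrix.vecTail] <;>
    try (ring_nf; simp [pow_succ, Complex.I_sq]; try ring)

lemma p53 (w : Fin 4 → ℂ) : StC 5 (StC 3 w) = ![I * w 0, I * w 1, -I * w 2, -I * w 3] := by
  funext i
  fin_cases i <;> simp [StC_apply, Gam, Complex.conj_I, Matrix.vecHead, Matrix.vecTail] <;>
    try (ring_nf; simp [pow_succ, Complex.I_sq]; try ring)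

lemma p01 (w : Fin 4 → ℂ) : StC 0 (StC 1 w) = ![I * w 0, -I * w 1, I * w 2, -I * w 3] := by
  funext i
  fin_cases i <;> simp [StC_apply, Gam, Complex.conj_I, Matrix.vecHead, Matrix.vecTail] <;>
    try (ring_nf; simp [pow_succ, Complex.I_sq]; try ring)

lemma p02 (w : Fin 4 → ℂ) : StC 0 (StC 2 w) = ![-w 1, w 0, -w 3, w 2] := by
  funext i
  fin_cases i <;> simp [StC_apply, Gam, Complex.conj_I, Matrix.vecHead, Matrix.vecTail] <;>
    try (ring_nf; simp [pow_succ, Complex.I_sq]; try ring)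

lemma p23 (w : Fin 4 → ℂ) : StC 2 (StC 3 w) = ![w 2, -w 3, w 0, -w 1] := by
  funext i
  fin_cases i <;> simp [StC_apply, Gam, Complex.conj_I, Matrix.vecHead, Matrix.vecTail] <;>
    try (ring_nf; simp [pow_succ, Complex.I_sq]; try ring)

lemma p03 (w : Fin 4 → ℂ) : StC 0 (StC 3 w) = ![w 3, w 2, w 1, w 0] := by
  funext i
  fin_cases i <;> simp [StC_apply, Gam, Complex.conj_I, Matrix.vecHead, Matrix.vecTail] <;>
    try (ring_nf; simp [pow_succ, Complex.I_sq]; try ring)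

lemma id_I (w : Fin 4 → ℂ) :
    StC 0 (StC 1 (StC 5 (StC 3 (StC 2 (StC 4 w))))) = fun i => -I * w i := by
  funext i
  fin_cases i <;> simp [p24, p53, p01] <;> simp [← mul_assoc, Complex.I_mul_I]

lemma id_u0 (w : Fin 4 → ℂ) :
    (fun i : Fin 4 => w i + -I * StC 0 (StC 1 w) i + -I * StC 5 (StC 3 w) i
      + -I * StC 2 (StC 4 w) i) = eV 0 (4 * w 0) := by
  funext i
  fin_cases i <;> simp [p24, p53, p01, eV] <;> try (ring_nf; simp [pow_succ, Complex.I_sq]; try ring)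

lemma id_u1 (w : Fin 4 → ℂ) :
    (fun i : Fin 4 => w i + I * StC 0 (StC 1 w) i + -I * StC 5 (StC 3 w) i
      + I * StC 2 (StC 4 w) i) = eV 1 (4 * w 1) := by
  funext i
  fin_cases i <;> simp [p24, p53, p01, eV] <;> try (ring_nf; simp [pow_succ, Complex.I_sq]; try ring)

lemma id_u2 (w : Fin 4 → ℂ) :
    (fun i : Fin 4 => w i + -I * StC 0 (StC 1 w) i + I * StC 5 (StC 3 w) i
      + I * StC 2 (StC 4 w) i) = eV 2 (4 * w 2) := by
  funext i
  fin_cases i <;> simp [p24, p53, p01, eV] <;> try (ring_nf; simp [pow_succ, Complex.I_sq]; try ring)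

lemma id_u3 (w : Fin 4 → ℂ) :
    (fun i : Fin 4 => w i + I * StC 0 (StC 1 w) i + I * StC 5 (StC 3 w) i
      + -I * StC 2 (StC 4 w) i) = eV 3 (4 * w 3) := by
  funext i
  fin_cases i <;> simp [p24, p53, p01, eV] <;> try (ring_nf; simp [pow_succ, Complex.I_sq]; try ring)

lemma id_c10 (c : ℂ) : StC 0 (StC 2 (eV 1 c)) = eV 0 (-c) := by
  funext i; fin_cases i <;> simp [p02, eV]

lemma id_c20 (c : ℂ) : StC 2 (StC 3 (eV 2 c)) = eV 0 c := by
  funext i; fin_cases i <;> simp [p23, eV]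

lemma id_c30 (c : ℂ) : StC 0 (StC 3 (eV 3 c)) = eV 0 c := by
  funext i; fin_cases i <;> simp [p03, eV]

lemma id_c01 (c : ℂ) : StC 0 (StC 2 (eV 0 c)) = eV 1 c := by
  funext i; fin_cases i <;> simp [p02, eV]

lemma id_c02 (c : ℂ) : StC 2 (StC 3 (eV 0 c)) = eV 2 c := by
  funext i; fin_cases i <;> simp [p23, eV]

lemma id_c03 (c : ℂ) : StC 0 (StC 3 (eV 0 c)) = eV 3 c := by
  funext i; fin_cases i <;> simp [p03, eV]

lemma id_scale (j : Fin 4) (c0 c : ℂ) (h : c0 ≠ 0) :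
    (fun i => c / c0 * eV j c0 i) = eV j c := by
  funext i
  by_cases hij : i = j <;> simp [eV, hij]
  field_simp

lemma id_sum (v : Fin 4 → ℂ) :
    v = eV 0 (v 0) + eV 1 (v 1) + eV 2 (v 2) + eV 3 (v 3) := by
  funext i; fin_cases i <;> simp [eV]

/-- The representation of Cl(4,2) on ℂ⁴ viewed as an 8-dimensional real vector space is
irreducible: any real subspace invariant under all the antilinear operators w ↦ Γ_α·conj(w)
is trivial or everything. -/
theorem clifford_representation_irreducible (W : Submodule ℝ (Fin 4 → ℂ))
    (hW : ∀ w ∈ W, ∀ α : Fin 6, (Gam α).mulVec (fun i => starRingEnd ℂ (w i)) ∈ W) :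
    W = ⊥ ∨ W = ⊤ := by
  by_cases hbot : W = ⊥
  · exact Or.inl hbot
  right
  obtain ⟨w, hw, hw0⟩ := Submodule.ne_bot_iff W |>.mp hbot
  have hSt : ∀ v, v ∈ W → ∀ a : Fin 6, StC a v ∈ W := fun v hv a => hW v hv a
  -- multiplication by I preserves W
  have hImem : ∀ v, v ∈ W → (fun i => I * v i) ∈ W := by
    intro v hv
    have h6 : StC 0 (StC 1 (StC 5 (StC 3 (StC 2 (StC 4 v))))) ∈ W := by
      exact hSt _ (hSt _ (hSt _ (hSt _ (hSt _ (hSt _ hv 4) 2) 3) 5) 1) 0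
    rw [id_I] at h6
    have hneg := W.neg_mem h6
    have e : (fun i : Fin 4 => I * v i) = -(fun i : Fin 4 => -I * v i) := by
      funext i; simp
    rw [e]; exact hneg
  -- multiplication by any complex scalar preserves W
  have hC : ∀ (z : ℂ) (v : Fin 4 → ℂ), v ∈ W → (fun i => z * v i) ∈ W := by
    intro z v hv
    have h1 := hImem v hv
    have e : (fun i : Fin 4 => z * v i) = z.re • v + z.im • (fun i => I * v i) := by
      funext i
      simp [Complex.real_smul]
      linear_combination -(v i) * Complex.re_add_im z
    rw [e]
    exact W.add_mem (W.smul_mem _ hv) (W.smul_mem _ h1)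
  -- the four diagonal projections
  have m1 : ∀ (z : ℂ), (fun i => z * StC 0 (StC 1 w) i) ∈ W :=
    fun z => hC z _ (hSt _ (hSt _ hw 1) 0)
  have m2 : ∀ (z : ℂ), (fun i => z * StC 5 (StC 3 w) i) ∈ W :=
    fun z => hC z _ (hSt _ (hSt _ hw 3) 5)
  have m3 : ∀ (z : ℂ), (fun i => z * StC 2 (StC 4 w) i) ∈ W :=
    fun z => hC z _ (hSt _ (hSt _ hw 4) 2)
  have hu0 : eV 0 (4 * w 0) ∈ W := by
    rw [← id_u0 w]
    exact W.add_mem (W.add_mem (W.add_mem hw (m1 (-I))) (m2 (-I))) (m3 (-I))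
  have hu1 : eV 1 (4 * w 1) ∈ W := by
    rw [← id_u1 w]
    exact W.add_mem (W.add_mem (W.add_mem hw (m1 I)) (m2 (-I))) (m3 I)
  have hu2 : eV 2 (4 * w 2) ∈ W := by
    rw [← id_u2 w]
    exact W.add_mem (W.add_mem (W.add_mem hw (m1 (-I))) (m2 I)) (m3 I)
  have hu3 : eV 3 (4 * w 3) ∈ W := by
    rw [← id_u3 w]
    exact W.add_mem (W.add_mem (W.add_mem hw (m1 I)) (m2 I)) (m3 (-I))
  -- some coordinate of w is nonzero; produce a nonzero multiple of e₀ in W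
  obtain ⟨k, hk⟩ := Function.ne_iff.mp hw0
  have hev0 : ∃ c : ℂ, c ≠ 0 ∧ eV 0 c ∈ W := by
    fin_cases k
    · exact ⟨4 * w 0, by simpa using hk, hu0⟩
    · refine ⟨-(4 * w 1), by simpa using hk, ?_⟩
      have h2 := hSt _ (hSt _ hu1 2) 0
      rwa [id_c10] at h2
    · refine ⟨4 * w 2, by simpa using hk, ?_⟩
      have h2 := hSt _ (hSt _ hu2 3) 2
      rwa [id_c20] at h2
    · refine ⟨4 * w 3, by simpa using hk, ?_⟩
      have h2 := hSt _ (hSt _ hu3 3) 0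
      rwa [id_c30] at h2
  obtain ⟨c0, hc0, h0⟩ := hev0
  have hev0c : ∀ c : ℂ, eV 0 c ∈ W := by
    intro c
    have := hC (c / c0) _ h0
    rwa [id_scale 0 c0 c hc0] at this
  have hevc : ∀ (j : Fin 4) (c : ℂ), eV j c ∈ W := by
    intro j c
    fin_cases j
    · exact hev0c c
    · have h2 := hSt _ (hSt _ (hev0c c) 2) 0
      rwa [id_c01] at h2
    · have h2 := hSt _ (hSt _ (hev0c c) 3) 2
      rwa [id_c02] at h2
    · have h2 := hSt _ (hSt _ (hev0c c) 3) 0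
      rwa [id_c03] at h2
  rw [Submodule.eq_top_iff']
  intro v
  rw [id_sum v]
  exact W.add_mem (W.add_mem (W.add_mem (hevc 0 (v 0)) (hevc 1 (v 1))) (hevc 2 (v 2)))
    (hevc 3 (v 3))
end
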